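/- arXiv:2408.02567 — 2 statements merged into one kernel-verified Lean document; each statement's English description precedes it below -/
import Mathlib

section
/- Let (M,g) be a Riemannian n-manifold (n ≥ 3). If at some point p ∈ M it holds that for every unit vector V ∈ T_pM and every orthonormal pair E_i, E_j ⊥ V one has Rm_g(E_i,V,V,E_i) = Rm_g(E_j,V,V,E_j) and Rm_g(E_i,V,V,E_j) = 0, then all 2-planes at T_pM have the same sectional curvature. -/
noncomputable section

open scoped BigOperators

/-- The Euclidean inner product on `ℝ^n` (the metric `g` at the point `p` in
orthonormal coordinates). -/
def dotProd (n : ℕ) (u w : Fin n → ℝ) : ℝ := ∑ i, u i * w i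

/-- Evaluation of a 4-tensor with components `T` on four vectors. -/
def eval4 (n : ℕ) (T : Fin n → Fin n → Fin n → Fin n → ℝ)
    (u w z y : Fin n → ℝ) : ℝ :=
  ∑ a, ∑ b, ∑ c, ∑ d, T a b c d * u a * w b * z c * y d

/-!
For a unit vector `V`, the hypothesis says that the Jacobi form `Rm(·, V, V, ·)` is a multiple
of the metric on `V⊥`: writing `x ⊥ V` as `t e + w` with `e` a unit vector and `w ⊥ e, V`, the
cross terms vanish and `Rm(w, V, V, w) = |w|² Rm(e, V, V, e)`. Hence `K(u, w) = Rm(u, w, w, u)`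
does not depend on the unit vector `u ⊥ w`, and by pair symmetry `K(u, w) = K(w, u)`. As `n ≥ 3`,
two orthonormal pairs `(u, w)`, `(u', w')` admit a unit `x ⊥ w, w'`, and then
`K(u, w) = K(x, w) = K(w', x) = K(u', w')`.
-/

open Matrix

lemma exists_smul_dotProduct_self_eq_one {n : ℕ} {y : Fin n → ℝ} (hy : y ≠ 0) :
    ∃ c : ℝ, c ≠ 0 ∧ (c • y) ⬝ᵥ (c • y) = 1 := by
  have hyy : 0 < y ⬝ᵥ y := by simpa using dotProduct_star_self_pos_iff.2 hy
  refine ⟨(√(y ⬝ᵥ y))⁻¹, by positivity, ?_⟩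
  rw [smul_dotProduct, dotProduct_smul, smul_eq_mul, smul_eq_mul, ← mul_assoc, ← mul_inv,
    Real.mul_self_sqrt hyy.le, inv_mul_cancel₀ hyy.ne']

lemma exists_unit_orthogonal {m n : ℕ} (hmn : m < n) (v : Fin m → Fin n → ℝ) :
    ∃ x : Fin n → ℝ, x ⬝ᵥ x = 1 ∧ ∀ i, x ⬝ᵥ v i = 0 := by
  have hker : LinearMap.ker (Matrix.of v).mulVecLin ≠ ⊥ :=
    LinearMap.ker_ne_bot_of_finrank_lt (by simpa using hmn)
  obtain ⟨y, hy, hy0⟩ := Submodule.exists_mem_ne_zero_of_ne_bot hker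
  obtain ⟨c, -, hc⟩ := exists_smul_dotProduct_self_eq_one hy0
  refine ⟨c • y, hc, fun i => ?_⟩
  have hvy : v i ⬝ᵥ y = 0 := by simpa [Matrix.mulVec] using congrFun hy i
  rw [smul_dotProduct, dotProduct_comm, hvy, smul_zero]

section Multilinear

variable {n : ℕ} (T : Fin n → Fin n → Fin n → Fin n → ℝ)

lemma eval4_add_left (u u' w z y : Fin n → ℝ) :
    eval4 n T (u + u') w z y = eval4 n T u w z y + eval4 n T u' w z y := by
  simp only [eval4, Pi.add_apply, mul_add, add_mul, Finset.sum_add_distrib]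

lemma eval4_add_right (u w z y y' : Fin n → ℝ) :
    eval4 n T u w z (y + y') = eval4 n T u w z y + eval4 n T u w z y' := by
  simp only [eval4, Pi.add_apply, mul_add, Finset.sum_add_distrib]

lemma eval4_smul_left (t : ℝ) (u w z y : Fin n → ℝ) :
    eval4 n T (t • u) w z y = t * eval4 n T u w z y := by
  simp only [eval4, Pi.smul_apply, smul_eq_mul, Finset.mul_sum]
  congr! 4
  ring

lemma eval4_smul_right (t : ℝ) (u w z y : Fin n → ℝ) :
    eval4 n T u w z (t • y) = t * eval4 n T u w z y := by
  simp only [eval4, Pi.smul_apply, smul_eq_mul, Finset.mul_sum]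
  congr! 4
  ring

lemma eval4_comm_pairs (hpair : ∀ a b c d, T a b c d = T c d a b) (u w z y : Fin n → ℝ) :
    eval4 n T u w z y = eval4 n T z y u w := by
  simp only [eval4, ← Fintype.sum_prod_type']
  let e := ((Equiv.prodAssoc _ _ _).symm.trans (Equiv.prodComm _ _)).trans
    (Equiv.prodAssoc (Fin n) (Fin n) (Fin n × Fin n))
  refine Fintype.sum_equiv e _ _ fun x => ?_
  simp only [e, hpair x.1, Equiv.trans_apply, Equiv.prodAssoc_symm_apply, Equiv.prodComm_apply,
    Prod.swap_prod_mk, Equiv.prodAssoc_apply]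
  ring

end Multilinear

def JacobiFormIsScalar (n : ℕ) (T : Fin n → Fin n → Fin n → Fin n → ℝ) (V : Fin n → ℝ) :
    Prop :=
  ∀ e f : Fin n → ℝ, e ⬝ᵥ e = 1 → f ⬝ᵥ f = 1 → e ⬝ᵥ f = 0 → e ⬝ᵥ V = 0 → f ⬝ᵥ V = 0 →
    eval4 n T e V V e = eval4 n T f V V f ∧ eval4 n T e V V f = 0

namespace JacobiFormIsScalar

variable {n : ℕ} {T : Fin n → Fin n → Fin n → Fin n → ℝ} {V e : Fin n → ℝ}

lemma eval4_of_orthogonal (h : JacobiFormIsScalar n T V) (he : e ⬝ᵥ e = 1)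
    (heV : e ⬝ᵥ V = 0) {w : Fin n → ℝ} (hwe : w ⬝ᵥ e = 0) (hwV : w ⬝ᵥ V = 0) :
    eval4 n T e V V w = 0 ∧ eval4 n T w V V e = 0 ∧
      eval4 n T w V V w = w ⬝ᵥ w * eval4 n T e V V e := by
  rcases eq_or_ne w 0 with rfl | hw0
  · simp [eval4]
  obtain ⟨c, hc0, hc⟩ := exists_smul_dotProduct_self_eq_one hw0
  have hef : e ⬝ᵥ (c • w) = 0 := by rw [dotProduct_smul, dotProduct_comm, hwe, smul_zero]
  have hfV : (c • w) ⬝ᵥ V = 0 := by rw [smul_dotProduct, hwV, smul_zero]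
  obtain ⟨hQ, hB⟩ := h e (c • w) he hc hef heV hfV
  obtain ⟨-, hB'⟩ := h (c • w) e hc he (by rwa [dotProduct_comm]) hfV heV
  simp only [eval4_smul_left, eval4_smul_right, smul_dotProduct, dotProduct_smul,
    smul_eq_mul] at hQ hB hB' hc
  refine ⟨(mul_eq_zero.1 hB).resolve_left hc0, (mul_eq_zero.1 hB').resolve_left hc0, ?_⟩
  linear_combination (-eval4 n T w V V w) * hc - (w ⬝ᵥ w) * hQ

lemma eval4_eq_dotProduct_mul (h : JacobiFormIsScalar n T V) (he : e ⬝ᵥ e = 1)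
    (heV : e ⬝ᵥ V = 0) {x : Fin n → ℝ} (hxV : x ⬝ᵥ V = 0) :
    eval4 n T x V V x = x ⬝ᵥ x * eval4 n T e V V e := by
  set t := x ⬝ᵥ e
  set w := x - t • e
  have hx : x = t • e + w := by simp [w]
  have hwe : w ⬝ᵥ e = 0 := by simp [w, sub_dotProduct, he, t]
  have hwV : w ⬝ᵥ V = 0 := by simp [w, sub_dotProduct, heV, hxV]
  obtain ⟨hB, hB', hQ⟩ := h.eval4_of_orthogonal he heV hwe hwV
  rw [hx]
  simp only [eval4_add_left, eval4_add_right, eval4_smul_left, eval4_smul_right,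
    add_dotProduct, dotProduct_add, smul_dotProduct, dotProduct_smul, smul_eq_mul,
    hB, hB', hQ, he, hwe, dotProduct_comm e w]
  ring

lemma eval4_eq_of_unit (h : JacobiFormIsScalar n T V) {e' : Fin n → ℝ} (he : e ⬝ᵥ e = 1)
    (he' : e' ⬝ᵥ e' = 1) (heV : e ⬝ᵥ V = 0) (he'V : e' ⬝ᵥ V = 0) :
    eval4 n T e V V e = eval4 n T e' V V e' := by
  rw [h.eval4_eq_dotProduct_mul he' he'V heV, he, one_mul]

end JacobiFormIsScalar

lemma eval4_sectional_eq_of_common_orthogonal {n : ℕ} {T : Fin n → Fin n → Fin n → Fin n → ℝ}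
    (hpair : ∀ a b c d, T a b c d = T c d a b)
    (hJ : ∀ V : Fin n → ℝ, V ⬝ᵥ V = 1 → JacobiFormIsScalar n T V)
    {u w u' w' x : Fin n → ℝ} (hu : u ⬝ᵥ u = 1) (hw : w ⬝ᵥ w = 1) (hu' : u' ⬝ᵥ u' = 1)
    (hw' : w' ⬝ᵥ w' = 1) (hx : x ⬝ᵥ x = 1) (huw : u ⬝ᵥ w = 0) (hu'w' : u' ⬝ᵥ w' = 0)
    (hxw : x ⬝ᵥ w = 0) (hxw' : x ⬝ᵥ w' = 0) :
    eval4 n T u w w u = eval4 n T u' w' w' u' :=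
  calc eval4 n T u w w u
      = eval4 n T x w w x := (hJ w hw).eval4_eq_of_unit hu hx huw hxw
    _ = eval4 n T w x x w := eval4_comm_pairs T hpair _ _ _ _
    _ = eval4 n T w' x x w' := (hJ x hx).eval4_eq_of_unit hw hw'
          (by rwa [dotProduct_comm]) (by rwa [dotProduct_comm])
    _ = eval4 n T x w' w' x := eval4_comm_pairs T hpair _ _ _ _
    _ = eval4 n T u' w' w' u' := (hJ w' hw').eval4_eq_of_unit hx hu' hxw' hu'w'

theorem pointwise_constant_sectional_curvature_general (n : ℕ) (hn : 3 ≤ n)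
    (T : Fin n → Fin n → Fin n → Fin n → ℝ)
    (hpair : ∀ a b c d, T a b c d = T c d a b)
    (hyp : ∀ V e f : Fin n → ℝ,
      dotProd n V V = 1 → dotProd n e e = 1 → dotProd n f f = 1 →
      dotProd n e f = 0 → dotProd n e V = 0 → dotProd n f V = 0 →
      eval4 n T e V V e = eval4 n T f V V f ∧ eval4 n T e V V f = 0) :
    ∃ κ : ℝ, ∀ u w : Fin n → ℝ,
      dotProd n u u = 1 → dotProd n w w = 1 → dotProd n u w = 0 →
      eval4 n T u w w u = κ := by
  have hJ : ∀ V, V ⬝ᵥ V = 1 → JacobiFormIsScalar n T V := fun V hV e f => hyp V e f hV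
  obtain ⟨w₀, hw₀, -⟩ := exists_unit_orthogonal (by omega : 0 < n) ![]
  obtain ⟨u₀, hu₀, hu₀w₀⟩ := exists_unit_orthogonal (by omega : 1 < n) ![w₀]
  refine ⟨eval4 n T u₀ w₀ w₀ u₀, fun u w hu hw huw => ?_⟩
  obtain ⟨x, hx, hxv⟩ := exists_unit_orthogonal (by omega : 2 < n) ![w, w₀]
  exact eval4_sectional_eq_of_common_orthogonal hpair hJ hu hw hu₀ hw₀ hx huw (hu₀w₀ 0)
    (hxv 0) (hxv 1)

/-- Let `T` be the Riemann curvature 4-tensor of a Riemannian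
`n`-manifold (`n ≥ 3`) at a point `p` (expressed in orthonormal coordinates,
with its algebraic symmetries).  If for every unit vector `V` and every
orthonormal pair `e, f ⊥ V` one has `Rm(e,V,V,e) = Rm(f,V,V,f)` and
`Rm(e,V,V,f) = 0`, then all 2-planes at `p` have the same sectional curvature
`Rm(u,w,w,u)`. -/
theorem pointwise_constant_sectional_curvature (n : ℕ) (hn : 3 ≤ n)
    (T : Fin n → Fin n → Fin n → Fin n → ℝ)
    (hskew₁ : ∀ a b c d, T a b c d = -T b a c d)
    (hskew₂ : ∀ a b c d, T a b c d = -T a b d c)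
    (hpair : ∀ a b c d, T a b c d = T c d a b)
    (hyp : ∀ V e f : Fin n → ℝ,
      dotProd n V V = 1 → dotProd n e e = 1 → dotProd n f f = 1 →
      dotProd n e f = 0 → dotProd n e V = 0 → dotProd n f V = 0 →
      eval4 n T e V V e = eval4 n T f V V f ∧ eval4 n T e V V f = 0) :
    ∃ κ : ℝ, ∀ u w : Fin n → ℝ,
      dotProd n u u = 1 → dotProd n w w = 1 → dotProd n u w = 0 →
      eval4 n T u w w u = κ :=
  pointwise_constant_sectional_curvature_general n hn T hpair hyp
end
end

section
/- Let γ(t) be a causally independent geodesic of a semi-Riemannian n-manifold (M,g) (n ≥ 3) with parallel frame {E_1,...,E_r}, timelike E_1,...,E_k. If J(t) = Σ_{i=1}^r J^i(t) E_i is a Jacobi field along γ, then both its 'timelike part' J_t := Σ_{i=1}^k J^i E_i and its 'spacelike part' J_s := Σ_{i=k+1}^r J^i E_i are themselves Jacobi fields along γ; equivalently, the component functions satisfy the decoupled systems (J^j)'' = Rm_g(J_t,γ',γ',E_j) for j ≤ k and (J^j)'' = −Rm_g(J_s,γ',γ',E_j) for j > k. -/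
noncomputable section

open scoped BigOperators

/-- Let `γ` be a causally independent geodesic of a
semi-Riemannian `n`-manifold (`n ≥ 3`) with maximal parallel pseudo-orthonormal
frame `{E_1,…,E_r} ⊆ γ'^⊥`, the first `k` timelike (`ε_i = -1`) and the rest
spacelike (`ε_i = +1`), and let `R t i j = Rm_g(E_i,γ',γ',E_j)|_{γ(t)}`, so
that a vector field `J = Σᵢ Jⁱ Eᵢ` is a Jacobi field iff
`ε_j (Jʲ)'' + Σᵢ Jⁱ R_{ij} = 0` for all `j`.  Then the timelike part
`J_t = Σ_{i≤k} Jⁱ Eᵢ` and the spacelike part `J_s = Σ_{i>k} Jⁱ Eᵢ` of a Jacobi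
field `J` are again Jacobi fields; equivalently, the components satisfy the
decoupled systems `(Jʲ)'' = Rm(J_t,γ',γ',E_j)` for `j ≤ k` and
`(Jʲ)'' = -Rm(J_s,γ',γ',E_j)` for `j > k`. -/
theorem jacobi_field_splits (n r k : ℕ) (hn : 3 ≤ n) (hr : r ≤ n - 1) (hk : k ≤ r)
    (ε : Fin r → ℝ) (hε : ∀ i, ε i = if (i : ℕ) < k then -1 else 1)
    (R : ℝ → Fin r → Fin r → ℝ)
    (hRsymm : ∀ t i j, R t i j = R t j i)
    (hCI : ∀ (t : ℝ) (i j : Fin r),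
      (((i : ℕ) < k ∧ ¬(j : ℕ) < k) ∨ (¬(i : ℕ) < k ∧ (j : ℕ) < k)) → R t i j = 0)
    (J : ℝ → Fin r → ℝ) (hJ : ∀ i, ContDiff ℝ (⊤ : ℕ∞) fun t => J t i)
    (hJacobi : ∀ (t : ℝ) (j : Fin r),
      ε j * deriv (deriv fun s => J s j) t + ∑ i, J t i * R t i j = 0) :
    -- the timelike part J_t is a Jacobi field
    (∀ (t : ℝ) (j : Fin r),
      ε j * deriv (deriv fun s => if (j : ℕ) < k then J s j else 0) t
        + ∑ i : Fin r, (if (i : ℕ) < k then J t i else 0) * R t i j = 0) ∧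
    -- the spacelike part J_s is a Jacobi field
    (∀ (t : ℝ) (j : Fin r),
      ε j * deriv (deriv fun s => if (j : ℕ) < k then 0 else J s j) t
        + ∑ i : Fin r, (if (i : ℕ) < k then 0 else J t i) * R t i j = 0) ∧
    -- equivalently, the components satisfy the decoupled systems
    (∀ (t : ℝ) (j : Fin r), (j : ℕ) < k →
      deriv (deriv fun s => J s j) t
        = ∑ i : Fin r, (if (i : ℕ) < k then J t i else 0) * R t i j) ∧
    (∀ (t : ℝ) (j : Fin r), ¬(j : ℕ) < k →
      deriv (deriv fun s => J s j) t
        = -∑ i : Fin r, (if (i : ℕ) < k then 0 else J t i) * R t i j) := by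

  -- key sum identities
  have hsumT : ∀ (t : ℝ) (j : Fin r), (j : ℕ) < k →
      (∑ i : Fin r, (if (i : ℕ) < k then J t i else 0) * R t i j)
        = ∑ i : Fin r, J t i * R t i j := by
    intro t j hj
    refine Finset.sum_congr rfl fun i _ => ?_
    by_cases hi : (i : ℕ) < k
    · simp [hi]
    · simp [hi, hCI t i j (Or.inr ⟨hi, hj⟩)]
  have hsumS : ∀ (t : ℝ) (j : Fin r), ¬(j : ℕ) < k →
      (∑ i : Fin r, (if (i : ℕ) < k then 0 else J t i) * R t i j)
        = ∑ i : Fin r, J t i * R t i j := by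
    intro t j hj
    refine Finset.sum_congr rfl fun i _ => ?_
    by_cases hi : (i : ℕ) < k
    · simp [hi, hCI t i j (Or.inl ⟨hi, hj⟩)]
    · simp [hi]
  have hconj3 : ∀ (t : ℝ) (j : Fin r), (j : ℕ) < k →
      deriv (deriv fun s => J s j) t
        = ∑ i : Fin r, (if (i : ℕ) < k then J t i else 0) * R t i j := by
    intro t j hj
    have h := hJacobi t j
    rw [hε j, if_pos hj] at h
    rw [hsumT t j hj]
    linarith
  have hconj4 : ∀ (t : ℝ) (j : Fin r), ¬(j : ℕ) < k →
      deriv (deriv fun s => J s j) t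
        = -∑ i : Fin r, (if (i : ℕ) < k then 0 else J t i) * R t i j := by
    intro t j hj
    have h := hJacobi t j
    rw [hε j, if_neg hj] at h
    rw [hsumS t j hj]
    linarith
  refine ⟨?_, ?_, hconj3, hconj4⟩
  · intro t j
    by_cases hj : (j : ℕ) < k
    · simp only [hj, if_true, hε j]
      have := hconj3 t j hj
      linarith
    · simp only [hj, if_false]
      have hz : (∑ i : Fin r, (if (i : ℕ) < k then J t i else 0) * R t i j) = 0 := by
        refine Finset.sum_eq_zero fun i _ => ?_
        by_cases hi : (i : ℕ) < k
        · simp [hi, hCI t i j (Or.inl ⟨hi, hj⟩)]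
        · simp [hi]
      simp only [ite_mul, zero_mul] at hz
      simp [hz]
  · intro t j
    by_cases hj : (j : ℕ) < k
    · simp only [hj, if_true]
      have hz : (∑ i : Fin r, (if (i : ℕ) < k then 0 else J t i) * R t i j) = 0 := by
        refine Finset.sum_eq_zero fun i _ => ?_
        by_cases hi : (i : ℕ) < k
        · simp [hi]
        · simp [hi, hCI t i j (Or.inr ⟨hi, hj⟩)]
      simp only [ite_mul, zero_mul] at hz
      simp [hz]
    · simp only [hj, if_false, hε j]
      have := hconj4 t j hj
      linarith
end
end
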